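/- For all integers g ≥ 1 and natural numbers m, n, the eigenspace V₂^{(g,m,n)} := {f ∈ V₁^{(g,m,n)} : ι(f) = (−1)^{g−1} f} equals V₊^{(g,m,n)} when n + g is odd, and equals V₋^{(g,m,n)} when n + g is even. -/

import Mathlib

open MvPolynomial

noncomputable section

/-- `K = ℂ(z₁,z₂)`, the field of rational functions in two variables over `ℂ`. -/
abbrev K2 : Type := FractionRing (MvPolynomial (Fin 2) ℂ)

/-- The rational function `z₁`. -/
def z1 : K2 := algebraMap (MvPolynomial (Fin 2) ℂ) K2 (X 0)

/-- The rational function `z₂`. -/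
def z2 : K2 := algebraMap (MvPolynomial (Fin 2) ℂ) K2 (X 1)

/-- The conifold discriminant `Δ₁ = (1−432z₁)³ − 27·(432z₁)³·z₂`. -/
def Δ1 : K2 := (1 - 432 * z1) ^ 3 - 27 * (432 * z1) ^ 3 * z2

/-- The conifold discriminant `Δ₂ = 1 + 27z₂`. -/
def Δ2 : K2 := 1 + 27 * z2

/-- `V₀^{(g,m,n)}`: the ℂ-span of `z₁^k (1/432−z₁)^{m−k} z₂^n (Δ₁Δ₂)^{−(2g−2)}` for `0 ≤ k ≤ m`. -/
def V0 (g : ℤ) (m n : ℕ) : Submodule ℂ K2 :=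
  Submodule.span ℂ
    {f : K2 | ∃ k : ℕ, k ≤ m ∧
      f = z1 ^ k * (1 / 432 - z1) ^ (m - k) * z2 ^ n * (Δ1 * Δ2) ^ (-(2 * g - 2))}

/-- `V₁^{(g,m,n)} = {f ∈ V₀^{(g,m,n)} : ι(f) ∈ V₀^{(g,m,n)}}`. -/
def V1 (ι : K2 →ₐ[ℂ] K2) (g : ℤ) (m n : ℕ) : Submodule ℂ K2 :=
  V0 g m n ⊓ (V0 g m n).comap ι.toLinearMap

/-- `V₂^{(g,m,n)} = {f ∈ V₁^{(g,m,n)} : ι(f) = (−1)^{g−1} f}`. -/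
def V2 (ι : K2 →ₐ[ℂ] K2) (g : ℤ) (m n : ℕ) : Submodule ℂ K2 :=
  V1 ι g m n ⊓
    LinearMap.ker (ι.toLinearMap - ((-1 : ℂ) ^ (g - 1)) • (LinearMap.id : K2 →ₗ[ℂ] K2))

/-- `V₊^{(g,m,n)}`: the ℂ-span of `z₁^{k₁}(1/432−z₁)^{k₂} z₂^n (Δ₁Δ₂)^{−(2g−2)}`
over all `k₁, k₂ ≥ 0` with `k₁+k₂ ≤ m` and `k₁−k₂ = 3n−6g+6`. -/
def Vplus (g : ℤ) (m n : ℕ) : Submodule ℂ K2 :=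
  Submodule.span ℂ
    {f : K2 | ∃ k₁ k₂ : ℕ, k₁ + k₂ ≤ m ∧ (k₁ : ℤ) - k₂ = 3 * n - 6 * g + 6 ∧
      f = z1 ^ k₁ * (1 / 432 - z1) ^ k₂ * z2 ^ n * (Δ1 * Δ2) ^ (-(2 * g - 2))}

/-- `V₋^{(g,m,n)}`: the ℂ-span of `(1/432−2z₁)·z₁^{k₁}(1/432−z₁)^{k₂} z₂^n (Δ₁Δ₂)^{−(2g−2)}`
over all `k₁, k₂ ≥ 0` with `k₁+k₂ ≤ m−1` and `k₁−k₂ = 3n−6g+6`. -/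
def Vminus (g : ℤ) (m n : ℕ) : Submodule ℂ K2 :=
  Submodule.span ℂ
    {f : K2 | ∃ k₁ k₂ : ℕ, k₁ + k₂ + 1 ≤ m ∧ (k₁ : ℤ) - k₂ = 3 * n - 6 * g + 6 ∧
      f = (1 / 432 - 2 * z1) * z1 ^ k₁ * (1 / 432 - z1) ^ k₂ * z2 ^ n *
            (Δ1 * Δ2) ^ (-(2 * g - 2))}

/-!
Write `w = 1/432 - z₁`, `t = z₁/w` and `P = z₂ⁿ (Δ₁Δ₂)^{-(2g-2)}`. The involution swaps `z₁` and `w`,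
hence sends `t` to `t⁻¹`, and it multiplies `P` by `(-1)ⁿ t^c` with `c = 3n - 6g + 6`. Therefore it
maps `e_j = t^j wᵐ P` to `(-1)ⁿ e_{m+c-j}`, and `V₀` is spanned by `e_0, …, e_m`. Because `t` is
transcendental, the `e_j` (`j ∈ ℤ`) are linearly independent. Comparing coefficients shows that an
eigenvector of `ι` in `V₀` is a combination of the pairs `e_j ± e_{m+c-j}` with both indices in
`[0, m]`. After factoring out a monomial, such a pair is `z₁ᵈ ± wᵈ` times a monomial. Since
`z₁ + w` is a constant, `z₁ᵈ + wᵈ` is a polynomial in `z₁w` of degree at most `d/2`, and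
`wᵈ - z₁ᵈ` is `w - z₁` times such a polynomial. This gives exactly the generators of `V₊` and `V₋`.
-/

open Submodule

theorem Transcendental.linearIndependent_zpow {F E : Type*} [Field F] [Field E] [Algebra F E]
    {x : E} (hx : Transcendental F x) : LinearIndependent F (fun j : ℤ => x ^ j) := by
  have hx0 : x ≠ 0 := by rintro rfl; exact hx isAlgebraic_zero
  have hpow : LinearIndependent F (fun n : ℕ => x ^ n) := by
    have h := (Polynomial.basisMonomials F).linearIndependent.map' (Polynomial.aeval x).toLinearMap
      (by rw [LinearMap.ker_eq_bot]; exact transcendental_iff_injective.1 hx)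
    simpa [Function.comp_def] using h
  rw [linearIndependent_iff_finset_linearIndependent]
  intro s
  obtain ⟨N, hN⟩ : ∃ N : ℕ, ∀ j ∈ s, -(N : ℤ) ≤ j :=
    ⟨s.sup fun j => (-j).toNat, fun j hj => by
      have := Finset.le_sup (f := fun j => (-j).toNat) hj; omega⟩
  have hinj : Function.Injective fun j : s => ((j : ℤ) + N).toNat := by
    intro a b hab
    have := hN a a.2; have := hN b b.2
    exact Subtype.ext (by simp only at hab; omega)
  have hshift : (fun j : ℤ => x ^ j) ∘ ((↑) : s → ℤ) =
      LinearMap.mulLeft F (x ^ (-(N : ℤ))) ∘ (fun n : ℕ => x ^ n) ∘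
        fun j : s => ((j : ℤ) + N).toNat := by
    funext j
    simp only [Function.comp_apply, LinearMap.mulLeft_apply]
    rw [← zpow_natCast, Int.toNat_of_nonneg (by linarith [hN j j.2]), ← zpow_add₀ hx0]
    ring_nf
  rw [hshift]
  exact (hpow.comp _ hinj).map' _
    (LinearMap.ker_eq_bot.2 (mul_right_injective₀ (zpow_ne_zero _ hx0)))

open Finsupp in
theorem LinearIndependent.mem_span_image_add_smul_of_apply_eq_smul {k V α : Type*} [Field k]
    [AddCommGroup V] [Module k V] {e : α → V} (he : LinearIndependent k e) {σ : α → α}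
    (hσ : σ.Injective) {T : V →ₗ[k] V} (hT : ∀ j, T (e j) = e (σ j)) {δ : k} (hδ : δ * δ = 1)
    (htwo : (2 : k) ≠ 0) {s : Set α} {f : V} (hf : f ∈ span k (e '' s)) (hTf : T f = δ • f) :
    f ∈ span k ((fun j => e j + δ • e (σ j)) '' {j | j ∈ s ∧ σ j ∈ s}) := by
  obtain ⟨l, hls, rfl⟩ := (mem_span_image_iff_linearCombination k).1 hf
  have hTl : T (linearCombination k e l) = linearCombination k (e ∘ σ) l := by
    rw [apply_linearCombination]
    exact congr_arg (linearCombination k · l) (funext hT)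
  have hcoeff : l.mapDomain σ = δ • l :=
    he (by rw [linearCombination_mapDomain, ← hTl, hTf, map_smul])
  have hsupp : ∀ j ∈ l.support, σ j ∈ l.support := by
    intro j hj
    have hj' := congr($hcoeff (σ j))
    rw [mapDomain_apply hσ, Finsupp.smul_apply, smul_eq_mul] at hj'
    rw [Finsupp.mem_support_iff] at hj ⊢
    exact right_ne_zero_of_mul (hj' ▸ hj)
  have hl : l ∈ supported k k {j | j ∈ s ∧ σ j ∈ s} := fun j hj => ⟨hls hj, hls (hsupp j hj)⟩
  have hsym : linearCombination k (fun j => e j + δ • e (σ j)) l =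
      (2 : k) • linearCombination k e l :=
    calc linearCombination k (fun j => e j + δ • e (σ j)) l
        = linearCombination k e l + δ • T (linearCombination k e l) := by
          rw [hTl]
          simp only [linearCombination_apply, Function.comp_apply, smul_add, sum_add, smul_sum,
            smul_comm δ]
      _ = (2 : k) • linearCombination k e l := by rw [hTf, smul_smul, hδ, one_smul, two_smul]
  have hmem := (mem_span_image_iff_linearCombination k).2 ⟨l, hl, hsym⟩
  simpa [smul_smul, htwo] using smul_mem _ (2⁻¹ : k) hmem

theorem mul_right_mem_span_image {k A : Type*} [CommSemiring k] [Semiring A] [Algebra k A]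
    {S : Set A} {v : A} (hv : v ∈ span k S) (c : A) : v * c ∈ span k ((· * c) '' S) := by
  have hmap := mem_map_of_mem (f := LinearMap.mulRight k c) hv
  rwa [map_span] at hmap

section SumConstant

variable {k A : Type*} [CommRing k] [CommRing A] [Algebra k A] {x y : A} {a : k}

theorem pow_mul_pow_mem_span_of_add_le (hxy : x + y = algebraMap k A a) (ha : IsUnit a)
    {m i j : ℕ} (hij : i + j ≤ m) :
    x ^ i * y ^ j ∈ span k {f | ∃ l ≤ m, f = x ^ l * y ^ (m - l)} := by
  obtain ⟨d, hd⟩ := Nat.exists_eq_add_of_le hij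
  induction d generalizing i j with
  | zero => exact subset_span ⟨i, by omega, by rw [show m - i = j by omega]⟩
  | succ d ih =>
    have hsplit : x ^ i * y ^ j =
        (↑ha.unit⁻¹ : k) • (x ^ (i + 1) * y ^ j + x ^ i * y ^ (j + 1)) := by
      rw [show x ^ (i + 1) * y ^ j + x ^ i * y ^ (j + 1) = a • (x ^ i * y ^ j) by
        rw [Algebra.smul_def, ← hxy]; ring, smul_smul, ha.val_inv_mul, one_smul]
    rw [hsplit]
    exact smul_mem _ _ (add_mem (ih (by omega) (by omega)) (ih (by omega) (by omega)))

theorem pow_mul_pow_mul_add_pow_mem_span (hxy : x + y = algebraMap k A a) :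
    ∀ d p q : ℕ, x ^ p * y ^ q * (x ^ d + y ^ d) ∈
      span k {f | ∃ i, 2 * i ≤ d ∧ f = x ^ (p + i) * y ^ (q + i)}
  | 0, p, q => by
    rw [show x ^ p * y ^ q * (x ^ 0 + y ^ 0) = (2 : k) • (x ^ (p + 0) * y ^ (q + 0)) by
      rw [ofNat_smul_eq_nsmul, two_nsmul]; ring]
    exact smul_mem _ _ (subset_span ⟨0, le_rfl, rfl⟩)
  | 1, p, q => by
    rw [show x ^ p * y ^ q * (x ^ 1 + y ^ 1) = a • (x ^ (p + 0) * y ^ (q + 0)) by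
      rw [Algebra.smul_def, ← hxy]; ring]
    exact smul_mem _ _ (subset_span ⟨0, Nat.zero_le _, rfl⟩)
  | d + 2, p, q => by
    have hrec : x ^ p * y ^ q * (x ^ (d + 2) + y ^ (d + 2)) =
        a • (x ^ p * y ^ q * (x ^ (d + 1) + y ^ (d + 1))) -
          x ^ (p + 1) * y ^ (q + 1) * (x ^ d + y ^ d) := by
      rw [Algebra.smul_def, ← hxy]; ring
    rw [hrec]
    refine sub_mem (smul_mem _ _ (span_mono ?_ (pow_mul_pow_mul_add_pow_mem_span hxy _ p q)))
      (span_mono ?_ (pow_mul_pow_mul_add_pow_mem_span hxy d (p + 1) (q + 1)))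
    · rintro _ ⟨i, hi, rfl⟩
      exact ⟨i, by omega, rfl⟩
    · rintro _ ⟨i, hi, rfl⟩
      exact ⟨i + 1, by omega, by ring_nf⟩

theorem pow_mul_pow_mul_sub_pow_mem_span (hxy : x + y = algebraMap k A a) :
    ∀ d p q : ℕ, x ^ p * y ^ q * (y ^ d - x ^ d) ∈
      span k {f | ∃ i, 2 * i + 1 ≤ d ∧ f = (y - x) * x ^ (p + i) * y ^ (q + i)}
  | 0, p, q => by
    rw [pow_zero, pow_zero, sub_self, mul_zero]
    exact zero_mem _
  | 1, p, q => subset_span ⟨0, le_rfl, by ring⟩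
  | d + 2, p, q => by
    have hrec : x ^ p * y ^ q * (y ^ (d + 2) - x ^ (d + 2)) =
        a • (x ^ p * y ^ q * (y ^ (d + 1) - x ^ (d + 1))) -
          x ^ (p + 1) * y ^ (q + 1) * (y ^ d - x ^ d) := by
      rw [Algebra.smul_def, ← hxy]; ring
    rw [hrec]
    refine sub_mem (smul_mem _ _ (span_mono ?_ (pow_mul_pow_mul_sub_pow_mem_span hxy _ p q)))
      (span_mono ?_ (pow_mul_pow_mul_sub_pow_mem_span hxy d (p + 1) (q + 1)))
    · rintro _ ⟨i, hi, rfl⟩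
      exact ⟨i, by omega, rfl⟩
    · rintro _ ⟨i, hi, rfl⟩
      exact ⟨i + 1, by omega, by ring_nf⟩

end SumConstant

def w1 : K2 := 1 / 432 - z1

def prefactor (g : ℤ) (n : ℕ) : K2 := z2 ^ n * (Δ1 * Δ2) ^ (-(2 * g - 2))

theorem z1_add_w1 : z1 + w1 = algebraMap ℂ K2 (1 / 432) := by
  rw [w1, map_div₀, map_one, map_ofNat]; ring

theorem transcendental_z1 : Transcendental ℂ z1 :=
  (transcendental_algebraMap_iff (IsFractionRing.injective _ K2)).2 (transcendental_X ℂ 0)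

theorem z1_ne_zero : z1 ≠ 0 := by
  rintro h; exact transcendental_z1 (h ▸ isAlgebraic_zero)

theorem w1_ne_zero : w1 ≠ 0 := by
  intro h
  apply transcendental_z1
  rw [show z1 = algebraMap ℂ K2 (1 / 432) by rw [← z1_add_w1, h, add_zero]]
  exact isAlgebraic_algebraMap _

theorem transcendental_z1_div_w1 : Transcendental ℂ (z1 / w1) := by
  intro h
  apply transcendental_z1
  have hz : z1 = (1 / 432 : ℂ) • ((z1 / w1)⁻¹ + 1)⁻¹ := by
    rw [inv_div, div_add_one z1_ne_zero, add_comm, z1_add_w1, inv_div, Algebra.smul_def]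
    field_simp
  rw [hz]
  exact ((h.inv.add isAlgebraic_one).inv).smul _

theorem algebraMap_ne_zero_of_constantCoeff_ne_zero {p : MvPolynomial (Fin 2) ℂ}
    (hp : constantCoeff p ≠ 0) : algebraMap (MvPolynomial (Fin 2) ℂ) K2 p ≠ 0 := by
  rw [Ne, IsFractionRing.to_map_eq_zero_iff]
  rintro rfl
  exact hp (map_zero _)

theorem z2_ne_zero : z2 ≠ 0 := by
  rw [z2, Ne, IsFractionRing.to_map_eq_zero_iff]; exact X_ne_zero 1

theorem Δ1_ne_zero : Δ1 ≠ 0 := by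
  have h : Δ1 = algebraMap (MvPolynomial (Fin 2) ℂ) K2
      ((1 - 432 * X 0) ^ 3 - 27 * (432 * X 0) ^ 3 * X 1) := by
    simp only [Δ1, z1, z2, map_sub, map_mul, map_pow, map_one, map_ofNat]
  rw [h]
  exact algebraMap_ne_zero_of_constantCoeff_ne_zero (by simp)

theorem Δ2_ne_zero : Δ2 ≠ 0 := by
  have h : Δ2 = algebraMap (MvPolynomial (Fin 2) ℂ) K2 (1 + 27 * X 1) := by
    simp only [Δ2, z2, map_add, map_mul, map_one, map_ofNat]
  rw [h]
  exact algebraMap_ne_zero_of_constantCoeff_ne_zero (by simp)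

theorem prefactor_ne_zero (g : ℤ) (n : ℕ) : prefactor g n ≠ 0 :=
  mul_ne_zero (pow_ne_zero _ z2_ne_zero) (zpow_ne_zero _ (mul_ne_zero Δ1_ne_zero Δ2_ne_zero))

def laurentMonomial (g : ℤ) (m n : ℕ) (j : ℤ) : K2 := (z1 / w1) ^ j * (w1 ^ m * prefactor g n)

theorem laurentMonomial_natCast (g : ℤ) {m k : ℕ} (n : ℕ) (hk : k ≤ m) :
    laurentMonomial g m n k = z1 ^ k * w1 ^ (m - k) * prefactor g n := by
  obtain ⟨d, rfl⟩ := Nat.exists_eq_add_of_le hk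
  rw [laurentMonomial, Nat.add_sub_cancel_left, pow_add, zpow_natCast, div_pow]
  field_simp [w1_ne_zero]

theorem linearIndependent_laurentMonomial (g : ℤ) (m n : ℕ) :
    LinearIndependent ℂ (laurentMonomial g m n) :=
  transcendental_z1_div_w1.linearIndependent_zpow.map'
    (LinearMap.mulRight ℂ (w1 ^ m * prefactor g n))
    (LinearMap.ker_eq_bot.2 (mul_left_injective₀
      (mul_ne_zero (pow_ne_zero _ w1_ne_zero) (prefactor_ne_zero g n))))

theorem V0_le_span_laurentMonomial (g : ℤ) (m n : ℕ) :
    V0 g m n ≤ span ℂ (laurentMonomial g m n '' Set.Icc 0 (m : ℤ)) := by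
  refine span_le.2 ?_
  rintro _ ⟨k, hk, rfl⟩
  refine subset_span ⟨k, ⟨k.cast_nonneg, Nat.cast_le.2 hk⟩, ?_⟩
  rw [laurentMonomial_natCast g n hk]
  simp only [prefactor, w1, mul_assoc]

theorem mul_prefactor_mem_V0 (g : ℤ) {m i j : ℕ} (n : ℕ) (hij : i + j ≤ m) :
    z1 ^ i * w1 ^ j * prefactor g n ∈ V0 g m n := by
  refine span_mono ?_ (mul_right_mem_span_image
    (pow_mul_pow_mem_span_of_add_le z1_add_w1 (isUnit_iff_ne_zero.2 (by norm_num)) hij) _)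
  rintro _ ⟨_, ⟨l, hl, rfl⟩, rfl⟩
  exact ⟨l, hl, by simp only [prefactor, w1, mul_assoc]⟩

theorem add_laurentMonomial_mem_Vplus (g : ℤ) {m n : ℕ} {j j' : ℤ}
    (hj : j ∈ Set.Icc 0 (m : ℤ)) (hj' : j' ∈ Set.Icc 0 (m : ℤ))
    (hsum : j + j' = m + (3 * n - 6 * g + 6)) :
    laurentMonomial g m n j + laurentMonomial g m n j' ∈ Vplus g m n := by
  wlog hle : j' ≤ j generalizing j j'
  · rw [add_comm]; exact this hj' hj (by linarith) (by linarith)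
  lift j to ℕ using hj.1
  lift j' to ℕ using hj'.1
  obtain ⟨d, rfl⟩ := Nat.exists_eq_add_of_le (Nat.cast_le.1 hle)
  obtain ⟨q, rfl⟩ := Nat.exists_eq_add_of_le (Nat.cast_le.1 hj.2)
  rw [laurentMonomial_natCast g n (by omega), laurentMonomial_natCast g n (by omega),
    show j' + d + q - (j' + d) = q by omega, show j' + d + q - j' = q + d by omega,
    show z1 ^ (j' + d) * w1 ^ q * prefactor g n + z1 ^ j' * w1 ^ (q + d) * prefactor g n =
      z1 ^ j' * w1 ^ q * (z1 ^ d + w1 ^ d) * prefactor g n by ring]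
  refine span_mono ?_
    (mul_right_mem_span_image (pow_mul_pow_mul_add_pow_mem_span z1_add_w1 d j' q) _)
  rintro _ ⟨_, ⟨i, hi, rfl⟩, rfl⟩
  refine ⟨j' + i, q + i, by omega, by push_cast at hsum ⊢; omega, ?_⟩
  simp only [prefactor, w1, mul_assoc]

theorem sub_laurentMonomial_mem_Vminus (g : ℤ) {m n : ℕ} {j j' : ℤ}
    (hj : j ∈ Set.Icc 0 (m : ℤ)) (hj' : j' ∈ Set.Icc 0 (m : ℤ))
    (hsum : j + j' = m + (3 * n - 6 * g + 6)) :
    laurentMonomial g m n j - laurentMonomial g m n j' ∈ Vminus g m n := by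
  wlog hle : j ≤ j' generalizing j j'
  · rw [← neg_sub]; exact neg_mem (this hj' hj (by linarith) (by linarith))
  lift j to ℕ using hj.1
  lift j' to ℕ using hj'.1
  obtain ⟨d, rfl⟩ := Nat.exists_eq_add_of_le (Nat.cast_le.1 hle)
  obtain ⟨q, rfl⟩ := Nat.exists_eq_add_of_le (Nat.cast_le.1 hj'.2)
  rw [laurentMonomial_natCast g n (by omega), laurentMonomial_natCast g n (by omega),
    show j + d + q - (j + d) = q by omega, show j + d + q - j = q + d by omega,
    show z1 ^ j * w1 ^ (q + d) * prefactor g n - z1 ^ (j + d) * w1 ^ q * prefactor g n =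
      z1 ^ j * w1 ^ q * (w1 ^ d - z1 ^ d) * prefactor g n by ring]
  refine span_mono ?_
    (mul_right_mem_span_image (pow_mul_pow_mul_sub_pow_mem_span z1_add_w1 d j q) _)
  rintro _ ⟨_, ⟨i, hi, rfl⟩, rfl⟩
  refine ⟨j + i, q + i, by omega, by push_cast at hsum ⊢; omega, ?_⟩
  simp only [prefactor, w1]
  ring

theorem mem_V2_iff {ι : K2 →ₐ[ℂ] K2} {g : ℤ} {m n : ℕ} {f : K2} :
    f ∈ V2 ι g m n ↔ f ∈ V0 g m n ∧ ι f = (-1 : ℂ) ^ (g - 1) • f := by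
  simp only [V2, V1, mem_inf, mem_comap, LinearMap.mem_ker, LinearMap.sub_apply,
    LinearMap.smul_apply, LinearMap.id_apply, AlgHom.toLinearMap_apply, sub_eq_zero]
  constructor
  · rintro ⟨⟨hf, -⟩, hι⟩
    exact ⟨hf, hι⟩
  · rintro ⟨hf, hι⟩
    exact ⟨⟨hf, hι ▸ smul_mem _ _ hf⟩, hι⟩

theorem neg_one_zpow_sub_one_eq (g : ℤ) (n : ℕ) :
    (-1 : ℂ) ^ (g - 1) = (-1) ^ ((n : ℤ) + g - 1) * (-1) ^ n := by
  rw [← zpow_natCast, ← zpow_add₀ (by norm_num),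
    show (n : ℤ) + g - 1 + n = g - 1 + 2 * n by ring, zpow_add₀ (by norm_num),
    (even_two_mul (n : ℤ)).neg_one_zpow, mul_one]

section Involution

variable {ι : K2 →ₐ[ℂ] K2} (h1 : ι z1 = 1 / 432 - z1)
  (h2 : ι z2 = -((432 * z1) ^ 3 * z2) / (1 - 432 * z1) ^ 3)

include h1 in
theorem iota_w1 : ι w1 = z1 := by
  rw [w1, map_sub, h1, map_div₀, map_one, map_ofNat]; ring

include h2 in
theorem iota_z2 : ι z2 = -(z1 / w1) ^ 3 * z2 := by
  rw [h2, show (1 : K2) - 432 * z1 = 432 * w1 by rw [w1]; ring]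
  field_simp [w1_ne_zero]

include h1 h2 in
theorem iota_Δ1_mul_Δ2 : ι (Δ1 * Δ2) = (z1 / w1) ^ 3 * (Δ1 * Δ2) := by
  have hw : (1 : K2) / 432 - z1 = w1 := rfl
  simp only [Δ1, Δ2, map_mul, map_sub, map_add, map_pow, map_one, map_ofNat, h1, hw, iota_z2 h2]
  rw [show (1 : K2) - 432 * z1 = 432 * w1 by rw [w1]; ring,
    show (1 : K2) - 432 * w1 = 432 * z1 by rw [w1]; ring]
  field_simp [w1_ne_zero]
  ring

include h1 h2 in
theorem iota_prefactor (g : ℤ) (n : ℕ) :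
    ι (prefactor g n) =
      (-1 : ℂ) ^ n • ((z1 / w1) ^ (3 * (n : ℤ) - 6 * g + 6) * prefactor g n) := by
  have hexp : (z1 / w1) ^ (3 * (n : ℤ) - 6 * g + 6) =
      (z1 / w1) ^ (3 * n) * ((z1 / w1) ^ 3) ^ (-(2 * g - 2)) := by
    rw [← zpow_natCast _ 3, ← zpow_mul, ← zpow_natCast,
      ← zpow_add₀ (div_ne_zero z1_ne_zero w1_ne_zero)]
    push_cast
    ring_nf
  rw [prefactor, map_mul, map_pow, map_zpow₀, iota_z2 h2, iota_Δ1_mul_Δ2 h1 h2, mul_zpow, hexp,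
    Algebra.smul_def, map_pow, map_neg, map_one, neg_mul, neg_pow, mul_pow, ← pow_mul]
  ring

include h1 h2 in
theorem iota_laurentMonomial (g : ℤ) (m n : ℕ) (j : ℤ) :
    ι (laurentMonomial g m n j) =
      (-1 : ℂ) ^ n • laurentMonomial g m n (m + (3 * n - 6 * g + 6) - j) := by
  have ht : z1 / w1 ≠ 0 := div_ne_zero z1_ne_zero w1_ne_zero
  have hexp : (z1 / w1) ^ ((m : ℤ) + (3 * n - 6 * g + 6) - j) =
      (z1 / w1) ^ m * (z1 / w1) ^ (3 * (n : ℤ) - 6 * g + 6) * ((z1 / w1) ^ j)⁻¹ := by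
    rw [zpow_sub₀ ht, zpow_add₀ ht, zpow_natCast, div_eq_mul_inv]
  rw [laurentMonomial, laurentMonomial, map_mul, map_mul, map_zpow₀, map_pow, map_div₀,
    h1, ← w1, iota_w1 h1, iota_prefactor h1 h2, ← inv_div, inv_zpow, hexp, Algebra.smul_def,
    Algebra.smul_def, div_pow]
  field_simp [w1_ne_zero]

include h1 h2 in
theorem iota_monomial_of_sub_eq (g : ℤ) (n : ℕ) {k₁ k₂ : ℕ}
    (hk : (k₁ : ℤ) - k₂ = 3 * n - 6 * g + 6) :
    ι (z1 ^ k₁ * w1 ^ k₂ * prefactor g n) =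
      (-1 : ℂ) ^ n • (z1 ^ k₁ * w1 ^ k₂ * prefactor g n) := by
  have hm := laurentMonomial_natCast g n (Nat.le_add_right k₁ k₂)
  rw [Nat.add_sub_cancel_left] at hm
  rw [← hm, iota_laurentMonomial h1 h2, ← hk]
  push_cast
  ring_nf

include h1 h2 in
theorem V2_le_span_pairs (g : ℤ) (m n : ℕ) :
    V2 ι g m n ≤ span ℂ ((fun j => laurentMonomial g m n j + (-1 : ℂ) ^ ((n : ℤ) + g - 1) •
        laurentMonomial g m n (m + (3 * n - 6 * g + 6) - j)) ''
      {j | j ∈ Set.Icc 0 (m : ℤ) ∧ m + (3 * n - 6 * g + 6) - j ∈ Set.Icc 0 (m : ℤ)}) := by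
  intro f hf
  rw [mem_V2_iff] at hf
  refine (linearIndependent_laurentMonomial g m n).mem_span_image_add_smul_of_apply_eq_smul
    (T := (-1 : ℂ) ^ n • ι.toLinearMap) sub_right_injective (fun j => ?_) ?_ two_ne_zero
    (V0_le_span_laurentMonomial g m n hf.1) ?_
  · rw [LinearMap.smul_apply, AlgHom.toLinearMap_apply, iota_laurentMonomial h1 h2, smul_smul,
      ← mul_pow, neg_one_mul, neg_neg, one_pow, one_smul]
  · rw [← mul_zpow]; norm_num
  · rw [LinearMap.smul_apply, AlgHom.toLinearMap_apply, hf.2, smul_smul, ← zpow_natCast,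
      ← zpow_add₀ (by norm_num)]
    ring_nf

include h1 h2 in
theorem Vplus_le_V2 {g : ℤ} {m n : ℕ} (hodd : Odd ((n : ℤ) + g)) : Vplus g m n ≤ V2 ι g m n := by
  refine span_le.2 ?_
  rintro _ ⟨k₁, k₂, hk, hdiff, rfl⟩
  have hv : z1 ^ k₁ * (1 / 432 - z1) ^ k₂ * z2 ^ n * (Δ1 * Δ2) ^ (-(2 * g - 2)) =
      z1 ^ k₁ * w1 ^ k₂ * prefactor g n := by
    simp only [prefactor, w1, mul_assoc]
  rw [SetLike.mem_coe, mem_V2_iff, hv, iota_monomial_of_sub_eq h1 h2 g n hdiff,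
    neg_one_zpow_sub_one_eq g n, (hodd.sub_odd odd_one).neg_one_zpow, one_mul]
  exact ⟨mul_prefactor_mem_V0 g n hk, rfl⟩

include h1 h2 in
theorem Vminus_le_V2 {g : ℤ} {m n : ℕ} (heven : Even ((n : ℤ) + g)) :
    Vminus g m n ≤ V2 ι g m n := by
  refine span_le.2 ?_
  rintro _ ⟨k₁, k₂, hk, hdiff, rfl⟩
  have hv : (1 / 432 - 2 * z1) * z1 ^ k₁ * (1 / 432 - z1) ^ k₂ * z2 ^ n *
      (Δ1 * Δ2) ^ (-(2 * g - 2)) = (w1 - z1) * (z1 ^ k₁ * w1 ^ k₂ * prefactor g n) := by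
    simp only [prefactor, w1]
    ring
  rw [SetLike.mem_coe, mem_V2_iff, hv, map_mul, map_sub, iota_w1 h1, h1, ← w1,
    iota_monomial_of_sub_eq h1 h2 g n hdiff, neg_one_zpow_sub_one_eq g n,
    (heven.sub_odd odd_one).neg_one_zpow]
  refine ⟨?_, ?_⟩
  · rw [show (w1 - z1) * (z1 ^ k₁ * w1 ^ k₂ * prefactor g n) =
        z1 ^ k₁ * w1 ^ (k₂ + 1) * prefactor g n - z1 ^ (k₁ + 1) * w1 ^ k₂ * prefactor g n by
      ring]
    exact sub_mem (mul_prefactor_mem_V0 g n (by omega)) (mul_prefactor_mem_V0 g n (by omega))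
  · rw [mul_smul_comm, neg_one_mul, neg_smul, ← smul_neg, ← neg_mul, neg_sub]

end Involution

theorem V2_eq_Vplus_or_Vminus_general (ι : K2 →ₐ[ℂ] K2)
    (h1 : ι z1 = 1 / 432 - z1)
    (h2 : ι z2 = -((432 * z1) ^ 3 * z2) / (1 - 432 * z1) ^ 3)
    (g : ℤ) (m n : ℕ) :
    (Odd ((n : ℤ) + g) → V2 ι g m n = Vplus g m n) ∧
    (Even ((n : ℤ) + g) → V2 ι g m n = Vminus g m n) := by
  have hpairs := V2_le_span_pairs h1 h2 g m n
  refine ⟨fun hodd => le_antisymm (hpairs.trans (span_le.2 ?_)) (Vplus_le_V2 h1 h2 hodd),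
    fun heven => le_antisymm (hpairs.trans (span_le.2 ?_)) (Vminus_le_V2 h1 h2 heven)⟩ <;>
    rintro _ ⟨j, ⟨hj, hσj⟩, rfl⟩ <;> dsimp only
  · rw [(hodd.sub_odd odd_one).neg_one_zpow, one_smul]
    exact add_laurentMonomial_mem_Vplus g hj hσj (by ring)
  · rw [(heven.sub_odd odd_one).neg_one_zpow, neg_one_smul, ← sub_eq_add_neg]
    exact sub_laurentMonomial_mem_Vminus g hj hσj (by ring)

/-- The eigenspace `V₂^{(g,m,n)}` equals `V₊^{(g,m,n)}` when `n + g` is odd and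
equals `V₋^{(g,m,n)}` when `n + g` is even. -/
theorem V2_eq_Vplus_or_Vminus (ι : K2 →ₐ[ℂ] K2)
    (h1 : ι z1 = 1 / 432 - z1)
    (h2 : ι z2 = -((432 * z1) ^ 3 * z2) / (1 - 432 * z1) ^ 3)
    (g : ℤ) (hg : 1 ≤ g) (m n : ℕ) :
    (Odd ((n : ℤ) + g) → V2 ι g m n = Vplus g m n) ∧
    (Even ((n : ℤ) + g) → V2 ι g m n = Vminus g m n) :=
  V2_eq_Vplus_or_Vminus_general ι h1 h2 g m n
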